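/- The function φ₁ is locally Lipschitz continuous on [0,∞); moreover φ₁(x) ≤ φ(x) for all x ≥ 0, φ₁(x) > 0 for all x > 0, φ₁(0) = 0, and φ₁(x) → +∞ as x → ∞. -/

import Mathlib

open Filter MeasureTheory

/-- `φ(x) = inf_{‖y‖=x} ⟨y, f(y)⟩/‖y‖` for `x > 0`, and `φ(0) = 0`. -/
noncomputable def phi {d : ℕ} (f : EuclideanSpace ℝ (Fin d) → EuclideanSpace ℝ (Fin d))
    (x : ℝ) : ℝ :=
  if x = 0 then 0
  else sInf ((fun y : EuclideanSpace ℝ (Fin d) => (inner ℝ y (f y) : ℝ) / ‖y‖) '' {y | ‖y‖ = x})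

/-- `φ₀(x) = inf_{x/2 ≤ y ≤ 4x} φ(y)`. -/
noncomputable def phi0 {d : ℕ} (f : EuclideanSpace ℝ (Fin d) → EuclideanSpace ℝ (Fin d))
    (x : ℝ) : ℝ :=
  sInf (phi f '' Set.Icc (x / 2) (4 * x))

/-- `φ₁(x) = (1/x) ∫_x^{2x} min(v,1) φ₀(v) dv` for `x > 0`, and `φ₁(0) = 0`. -/
noncomputable def phi1 {d : ℕ} (f : EuclideanSpace ℝ (Fin d) → EuclideanSpace ℝ (Fin d))
    (x : ℝ) : ℝ :=
  if x = 0 then 0 else (1 / x) * ∫ v in x..(2 * x), min v 1 * phi0 f v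

/-!
Write `φ₁` as the dyadic mean `x⁻¹ ∫_x^{2x} g` of `g v = min v 1 * φ₀ v`. Rewriting `φ` and `φ₀`
as infima over fixed compact sets (the unit sphere, and `t ∈ [1/2, 4]`) shows that they are
continuous and positive on `(0, ∞)`; so `g` is continuous, and positivity, the bound `φ₁ ≤ φ`
and the growth at infinity follow by comparing the mean with the values of `g` on `[x, 2x]`.
The mean has derivative `x⁻¹ (2 g (2x) - g x - φ₁ x)`, which stays bounded as `x → 0` because
`g v ≤ M v` there; this gives the local Lipschitz bound.
-/

open Set
open scoped NNReal

theorem IsCompact.sInf_image_pos {α : Type*} [TopologicalSpace α] {K : Set α} (hK : IsCompact K)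
    (hne : K.Nonempty) {g : α → ℝ} (hg : ContinuousOn g K) (hpos : ∀ x ∈ K, 0 < g x) :
    0 < sInf (g '' K) := by
  obtain ⟨y, hy, hgy⟩ := (hK.image_of_continuousOn hg).sInf_mem (hne.image g)
  exact hgy ▸ hpos y hy

theorem LipschitzOnWith.insert {α β : Type*} [PseudoMetricSpace α] [PseudoMetricSpace β]
    {f : α → β} {K : ℝ≥0} {s : Set α} {a : α} (hf : LipschitzOnWith K f s)
    (ha : ∀ x ∈ s, dist (f x) (f a) ≤ K * dist x a) : LipschitzOnWith K f (insert a s) := by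
  refine LipschitzOnWith.of_dist_le_mul fun x hx y hy => ?_
  rcases hx with rfl | hx <;> rcases hy with rfl | hy
  · simp
  · rw [dist_comm, dist_comm x]
    exact ha y hy
  · exact ha x hx
  · exact hf.dist_le_mul x hx y hy

noncomputable def dyadicMean (g : ℝ → ℝ) (x : ℝ) : ℝ :=
  x⁻¹ * ∫ v in x..2 * x, g v

section dyadicMean

variable {g : ℝ → ℝ} {x c : ℝ}

@[simp]
theorem dyadicMean_zero (g : ℝ → ℝ) : dyadicMean g 0 = 0 := by
  simp [dyadicMean]

theorem dyadicMean_le_of_forall_le (hg : Continuous g) (hx : 0 < x)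
    (h : ∀ v ∈ Icc x (2 * x), g v ≤ c) :
    dyadicMean g x ≤ c := by
  have := intervalIntegral.integral_mono_on (by linarith) (hg.intervalIntegrable (μ := volume) _ _)
    intervalIntegrable_const h
  rw [intervalIntegral.integral_const, smul_eq_mul, show 2 * x - x = x by ring] at this
  calc dyadicMean g x ≤ x⁻¹ * (x * c) := mul_le_mul_of_nonneg_left this (by positivity)
    _ = c := by field_simp

theorem le_dyadicMean_of_forall_le (hg : Continuous g) (hx : 0 < x)
    (h : ∀ v ∈ Icc x (2 * x), c ≤ g v) :
    c ≤ dyadicMean g x := by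
  have := intervalIntegral.integral_mono_on (by linarith) intervalIntegrable_const
    (hg.intervalIntegrable (μ := volume) _ _) h
  rw [intervalIntegral.integral_const, smul_eq_mul, show 2 * x - x = x by ring] at this
  calc c = x⁻¹ * (x * c) := by field_simp
    _ ≤ dyadicMean g x := mul_le_mul_of_nonneg_left this (by positivity)

theorem dyadicMean_pos (hg : Continuous g) (hx : 0 < x) (h : ∀ v ∈ Ioo x (2 * x), 0 < g v) :
    0 < dyadicMean g x :=
  mul_pos (inv_pos.2 hx)
    (intervalIntegral.intervalIntegral_pos_of_pos_on (hg.intervalIntegrable _ _) h (by linarith))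

theorem hasDerivAt_dyadicMean (hg : Continuous g) (hx : x ≠ 0) :
    HasDerivAt (dyadicMean g) (x⁻¹ * (2 * g (2 * x) - g x - dyadicMean g x)) x := by
  have hF := fun b => (hg.integral_hasStrictDerivAt 0 b).hasDerivAt
  have hI : HasDerivAt (fun y => ∫ v in y..2 * y, g v) (g (2 * x) * (2 * 1) - g x) x := by
    refine ((hF (2 * x)).comp x ((hasDerivAt_id x).const_mul 2) |>.sub (hF x)).congr_of_eventuallyEq
      (Eventually.of_forall fun y => ?_)
    exact (intervalIntegral.integral_interval_sub_left (μ := volume) (hg.intervalIntegrable _ _)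
      (hg.intervalIntegrable _ _)).symm
  refine ((hasDerivAt_inv hx).mul hI).congr_deriv ?_
  simp only [dyadicMean]
  field_simp
  ring

theorem tendsto_dyadicMean_atTop (hg : Continuous g) (h : Tendsto g atTop atTop) :
    Tendsto (dyadicMean g) atTop atTop := by
  refine tendsto_atTop.2 fun C => ?_
  obtain ⟨R, hR⟩ := eventually_atTop.1 (tendsto_atTop.1 h C)
  filter_upwards [eventually_ge_atTop (max R 1)] with x hx
  exact le_dyadicMean_of_forall_le hg (by linarith [le_max_right R 1])
    fun v hv => hR v (by linarith [le_max_left R 1, hv.1])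

theorem lipschitzOnWith_dyadicMean_Icc (hg : Continuous g) {b : ℝ} {M : ℝ≥0}
    (hg0 : ∀ v ∈ Ioc 0 (2 * b), 0 ≤ g v) (hgM : ∀ v ∈ Ioc 0 (2 * b), g v ≤ M * v) :
    LipschitzOnWith (4 * M) (dyadicMean g) (Icc 0 b) := by
  have hgb : ∀ x ∈ Ioc 0 b, ∀ v ∈ Icc x (2 * x), 0 ≤ g v ∧ g v ≤ M * v := fun x hx v hv =>
    have hv' : v ∈ Ioc 0 (2 * b) := ⟨hx.1.trans_le hv.1, hv.2.trans (by linarith [hx.2])⟩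
    ⟨hg0 v hv', hgM v hv'⟩
  have hmean : ∀ x ∈ Ioc 0 b, 0 ≤ dyadicMean g x ∧ dyadicMean g x ≤ 2 * M * x := fun x hx =>
    ⟨le_dyadicMean_of_forall_le hg hx.1 fun v hv => (hgb x hx v hv).1,
      dyadicMean_le_of_forall_le hg hx.1 fun v hv =>
        (hgb x hx v hv).2.trans (by nlinarith [hv.2, M.2])⟩
  have hIcc : Icc 0 b ⊆ insert 0 (Ioc 0 b) := fun x hx => by
    rcases eq_or_lt_of_le hx.1 with h | h
    exacts [Or.inl h.symm, Or.inr ⟨h, hx.2⟩]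
  refine (LipschitzOnWith.insert ?_ fun x hx => ?_).mono hIcc
  · refine Convex.lipschitzOnWith_of_nnnorm_hasDerivWithin_le (convex_Ioc 0 b)
      (fun x hx => (hasDerivAt_dyadicMean hg hx.1.ne').hasDerivWithinAt) fun x hx => ?_
    have hx2 : 2 * x ∈ Icc x (2 * x) := ⟨by linarith [hx.1], le_rfl⟩
    obtain ⟨hgx₀, hgxM⟩ := hgb x hx x ⟨le_rfl, by linarith [hx.1]⟩
    obtain ⟨hg2x₀, hg2xM⟩ := hgb x hx (2 * x) hx2
    obtain ⟨hDx₀, hDxM⟩ := hmean x hx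
    have hMx : 0 ≤ (M : ℝ) * x := mul_nonneg M.2 hx.1.le
    rw [← NNReal.coe_le_coe, coe_nnnorm, Real.norm_eq_abs, abs_mul, abs_inv, abs_of_pos hx.1,
      inv_mul_le_iff₀ hx.1, abs_le]
    push_cast
    constructor <;> linarith
  · obtain ⟨hDx₀, hDxM⟩ := hmean x hx
    rw [dyadicMean_zero, Real.dist_eq, Real.dist_eq, sub_zero, sub_zero, abs_of_nonneg hDx₀,
      abs_of_pos hx.1]
    push_cast
    nlinarith [M.2, hx.1]

end dyadicMean

section

variable {d : ℕ} {f : EuclideanSpace ℝ (Fin d) → EuclideanSpace ℝ (Fin d)}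

-- For `r > 0` this is `phi f r` (put `y = r • u`), but as an infimum over a fixed compact set
-- it is continuous in `r`.
noncomputable def phiExt (f : EuclideanSpace ℝ (Fin d) → EuclideanSpace ℝ (Fin d)) (r : ℝ) : ℝ :=
  sInf ((fun u => inner ℝ u (f (r • u))) '' Metric.sphere 0 1)

theorem continuous_phiExt (hf : Continuous f) : Continuous (phiExt f) :=
  (isCompact_sphere _ _).continuous_sInf <|
    continuous_snd.inner (hf.comp (continuous_fst.smul continuous_snd))

theorem phi_eq_phiExt {r : ℝ} (hr : 0 < r) : phi f r = phiExt f r := by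
  rw [phi, if_neg hr.ne', phiExt]
  congr 1
  ext a
  constructor
  · rintro ⟨y, hy : ‖y‖ = r, rfl⟩
    refine ⟨r⁻¹ • y, ?_, ?_⟩
    · rw [mem_sphere_zero_iff_norm, norm_smul, hy, norm_inv, Real.norm_of_nonneg hr.le,
        inv_mul_cancel₀ hr.ne']
    · simp only [smul_inv_smul₀ hr.ne', real_inner_smul_left, hy, inv_mul_eq_div]
  · rintro ⟨u, hu, rfl⟩
    have hru : ‖r • u‖ = r := by
      rw [norm_smul, mem_sphere_zero_iff_norm.1 hu, Real.norm_of_nonneg hr.le, mul_one]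
    refine ⟨r • u, hru, ?_⟩
    simp only [hru, real_inner_smul_left, mul_div_cancel_left₀ _ hr.ne']

theorem phiExt_pos [Nonempty (Fin d)] (hf : Continuous f)
    (hdiss : ∀ x : EuclideanSpace ℝ (Fin d), x ≠ 0 → 0 < (inner ℝ x (f x) : ℝ))
    {r : ℝ} (hr : 0 < r) : 0 < phiExt f r := by
  refine (isCompact_sphere _ _).sInf_image_pos (NormedSpace.sphere_nonempty.2 zero_le_one)
    (by fun_prop) fun u hu => ?_
  have hu0 : r • u ≠ 0 := smul_ne_zero hr.ne' (ne_zero_of_mem_unit_sphere ⟨u, hu⟩)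
  have := hdiss _ hu0
  rw [real_inner_smul_left] at this
  exact pos_of_mul_pos_right this hr.le

noncomputable def phi0Ext (f : EuclideanSpace ℝ (Fin d) → EuclideanSpace ℝ (Fin d)) (x : ℝ) : ℝ :=
  sInf ((fun t => phiExt f (t * x)) '' Icc (1 / 2) 4)

theorem continuous_phi0Ext (hf : Continuous f) : Continuous (phi0Ext f) :=
  isCompact_Icc.continuous_sInf <| (continuous_phiExt hf).comp (continuous_snd.mul continuous_fst)

theorem phi0_eq_phi0Ext {x : ℝ} (hx : 0 < x) : phi0 f x = phi0Ext f x := by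
  have himg : (fun t => t * x) '' Icc (1 / 2) 4 = Icc (x / 2) (4 * x) := by
    rw [image_mul_right_Icc (by norm_num) hx.le]
    ring_nf
  rw [phi0, phi0Ext, ← himg, image_image]
  refine congrArg sInf (image_congr fun t ht => phi_eq_phiExt (by nlinarith [ht.1]))

theorem phi0Ext_pos [Nonempty (Fin d)] (hf : Continuous f)
    (hdiss : ∀ x : EuclideanSpace ℝ (Fin d), x ≠ 0 → 0 < (inner ℝ x (f x) : ℝ))
    {x : ℝ} (hx : 0 < x) : 0 < phi0Ext f x :=
  isCompact_Icc.sInf_image_pos (nonempty_Icc.2 (by norm_num))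
    ((continuous_phiExt hf).comp (continuous_id.mul continuous_const)).continuousOn
    fun t ht => phiExt_pos hf hdiss (mul_pos (by linarith [ht.1]) hx)

theorem phi0Ext_le_phiExt (hf : Continuous f) {x v : ℝ} (hx : 0 < x) (hxv : v / 2 ≤ x)
    (hvx : x ≤ 4 * v) : phi0Ext f v ≤ phiExt f x := by
  have hv : 0 < v := by linarith
  have hbdd : BddBelow ((fun t => phiExt f (t * v)) '' Icc (1 / 2) 4) :=
    (isCompact_Icc.image ((continuous_phiExt hf).comp (continuous_mul_const v))).bddBelow
  refine csInf_le hbdd ⟨x / v, ⟨?_, ?_⟩, ?_⟩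
  · rw [le_div_iff₀ hv]; linarith
  · rw [div_le_iff₀ hv]; linarith
  · simp only [div_mul_cancel₀ x hv.ne']

theorem tendsto_phi0Ext_atTop (h : Tendsto (phiExt f) atTop atTop) :
    Tendsto (phi0Ext f) atTop atTop := by
  refine tendsto_atTop.2 fun C => ?_
  obtain ⟨R, hR⟩ := eventually_atTop.1 (tendsto_atTop.1 h C)
  filter_upwards [eventually_ge_atTop (max (2 * R) 0)] with x hx
  refine le_csInf ((nonempty_Icc.2 (by norm_num)).image _) ?_
  rintro _ ⟨t, ht, rfl⟩
  exact hR _ (by nlinarith [le_max_left (2 * R) 0, le_max_right (2 * R) 0, ht.1])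

noncomputable def phi1Integrand (f : EuclideanSpace ℝ (Fin d) → EuclideanSpace ℝ (Fin d))
    (v : ℝ) : ℝ :=
  min v 1 * phi0Ext f v

theorem continuous_phi1Integrand (hf : Continuous f) : Continuous (phi1Integrand f) :=
  (continuous_id.min continuous_const).mul (continuous_phi0Ext hf)

theorem phi1_eq_dyadicMean {x : ℝ} (hx : 0 ≤ x) : phi1 f x = dyadicMean (phi1Integrand f) x := by
  rcases hx.eq_or_lt with rfl | hx
  · simp [phi1]
  rw [phi1, if_neg hx.ne', one_div, dyadicMean]
  congr 1
  refine intervalIntegral.integral_congr fun v hv => ?_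
  rw [uIcc_of_le (by linarith)] at hv
  simp only [phi1Integrand, phi0_eq_phi0Ext (hx.trans_le hv.1)]

theorem phi1_le_phi [Nonempty (Fin d)] (hf : Continuous f)
    (hdiss : ∀ x : EuclideanSpace ℝ (Fin d), x ≠ 0 → 0 < (inner ℝ x (f x) : ℝ)) {x : ℝ}
    (hx : 0 ≤ x) : phi1 f x ≤ phi f x := by
  rcases hx.eq_or_lt with rfl | hx
  · simp [phi1, phi]
  rw [phi1_eq_dyadicMean hx.le, phi_eq_phiExt hx]
  refine dyadicMean_le_of_forall_le (continuous_phi1Integrand hf) hx fun v hv => ?_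
  have hv0 := phi0Ext_pos hf hdiss (hx.trans_le hv.1)
  calc phi1Integrand f v ≤ phi0Ext f v := mul_le_of_le_one_left hv0.le (min_le_right _ _)
    _ ≤ phiExt f x := phi0Ext_le_phiExt hf hx (by linarith [hv.2]) (by linarith [hv.1])

theorem phi1_pos [Nonempty (Fin d)] (hf : Continuous f)
    (hdiss : ∀ x : EuclideanSpace ℝ (Fin d), x ≠ 0 → 0 < (inner ℝ x (f x) : ℝ)) {x : ℝ}
    (hx : 0 < x) : 0 < phi1 f x := by
  rw [phi1_eq_dyadicMean hx.le]
  refine dyadicMean_pos (continuous_phi1Integrand hf) hx fun v hv => ?_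
  have hv0 : 0 < v := hx.trans hv.1
  exact mul_pos (lt_min hv0 one_pos) (phi0Ext_pos hf hdiss hv0)

theorem exists_lipschitzOnWith_phi1 [Nonempty (Fin d)] (hf : Continuous f)
    (hdiss : ∀ x : EuclideanSpace ℝ (Fin d), x ≠ 0 → 0 < (inner ℝ x (f x) : ℝ)) (b : ℝ) :
    ∃ K : ℝ≥0, LipschitzOnWith K (phi1 f) (Icc 0 b) := by
  obtain ⟨M, hM⟩ := (isCompact_Icc (a := 0) (b := 2 * b)).bddAbove_image
    (continuous_phi0Ext hf).continuousOn
  refine ⟨4 * M.toNNReal, fun x hx y hy => ?_⟩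
  rw [phi1_eq_dyadicMean hx.1, phi1_eq_dyadicMean hy.1]
  refine lipschitzOnWith_dyadicMean_Icc (continuous_phi1Integrand hf) (fun v hv => ?_)
    (fun v hv => ?_) hx hy
  · exact mul_nonneg (le_min hv.1.le zero_le_one) (phi0Ext_pos hf hdiss hv.1).le
  · have hv0 := (phi0Ext_pos hf hdiss hv.1).le
    calc phi1Integrand f v ≤ v * phi0Ext f v := mul_le_mul_of_nonneg_right (min_le_left _ _) hv0
      _ ≤ v * M.toNNReal := mul_le_mul_of_nonneg_left
          ((hM ⟨v, Ioc_subset_Icc_self hv, rfl⟩).trans (Real.le_coe_toNNReal M)) hv.1.le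
      _ = M.toNNReal * v := mul_comm _ _

theorem tendsto_phi1_atTop (hf : Continuous f) (hphi : Tendsto (phi f) atTop atTop) :
    Tendsto (phi1 f) atTop atTop := by
  have hExt : Tendsto (phiExt f) atTop atTop :=
    hphi.congr' ((eventually_gt_atTop 0).mono fun r hr => phi_eq_phiExt hr)
  have hIntegrand : Tendsto (phi1Integrand f) atTop atTop :=
    (tendsto_phi0Ext_atTop hExt).congr' ((eventually_ge_atTop 1).mono fun v hv => by
      simp only [phi1Integrand, min_eq_right hv, one_mul])
  exact (tendsto_dyadicMean_atTop (continuous_phi1Integrand hf) hIntegrand).congr'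
    ((eventually_ge_atTop 0).mono fun x hx => (phi1_eq_dyadicMean hx).symm)

end

theorem stmt_1_general (d : ℕ) (hd : 1 ≤ d)
    (f : EuclideanSpace ℝ (Fin d) → EuclideanSpace ℝ (Fin d)) (hf : Continuous f)
    (hdiss : ∀ x : EuclideanSpace ℝ (Fin d), x ≠ 0 → 0 < (inner ℝ x (f x) : ℝ))
    (hliminf : Tendsto (phi f) atTop atTop) :
    (∀ b : ℝ, 0 ≤ b → ∃ K : NNReal, LipschitzOnWith K (phi1 f) (Set.Icc 0 b)) ∧
    (∀ x : ℝ, 0 ≤ x → phi1 f x ≤ phi f x) ∧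
    (∀ x : ℝ, 0 < x → 0 < phi1 f x) ∧
    phi1 f 0 = 0 ∧
    Tendsto (phi1 f) atTop atTop := by
  have : Nonempty (Fin d) := ⟨⟨0, hd⟩⟩
  exact ⟨fun b _ => exists_lipschitzOnWith_phi1 hf hdiss b, fun x hx => phi1_le_phi hf hdiss hx,
    fun x hx => phi1_pos hf hdiss hx, by simp [phi1], tendsto_phi1_atTop hf hliminf⟩

theorem stmt_1 (d : ℕ) (hd : 1 ≤ d)
    (f : EuclideanSpace ℝ (Fin d) → EuclideanSpace ℝ (Fin d)) (hf : Continuous f)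
    (hf0 : f 0 = 0)
    (hdiss : ∀ x : EuclideanSpace ℝ (Fin d), x ≠ 0 → 0 < (inner ℝ x (f x) : ℝ))
    (hliminf : Tendsto (phi f) atTop atTop) :
    (∀ b : ℝ, 0 ≤ b → ∃ K : NNReal, LipschitzOnWith K (phi1 f) (Set.Icc 0 b)) ∧
    (∀ x : ℝ, 0 ≤ x → phi1 f x ≤ phi f x) ∧
    (∀ x : ℝ, 0 < x → 0 < phi1 f x) ∧
    phi1 f 0 = 0 ∧
    Tendsto (phi1 f) atTop atTop :=
  stmt_1_general d hd f hf hdiss hliminf
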